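/- arXiv:math/0401237 — 2 statements merged into one kernel-verified Lean document; each statement's English description precedes it below -/
import Mathlib

section
/- Define the bivariate polynomial F_{A_n}(x,y) = Σ_{k=0}^{n} Σ_{ℓ=0}^{n} [(ℓ+1)/(k+ℓ+1)] * C(n, k+ℓ) * C(n+k, n) * x^k y^ℓ. Then F_{A_n}(x,x) = Σ_{k=0}^{n} [1/(k+1)] * C(n,k) * C(n+k+2, k) * x^k. -/
open Finset

lemma hockey (n m : ℕ) : ∑ k ∈ range (m+1), Nat.choose (n+k) n = Nat.choose (n+m+1) (n+1) := by
  induction m with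
  | zero => simp
  | succ m ih =>
      rw [sum_range_succ, ih, show n + (m+1) + 1 = (n+m+1) + 1 by ring,
        show n + (m+1) = n+m+1 by ring, Nat.choose_succ_succ (n+m+1) n, Nat.succ_eq_add_one]
      omega

lemma L2 (n m : ℕ) : ∑ k ∈ range (m+1), (m+1-k) * Nat.choose (n+k) n
    = Nat.choose (n+m+2) (n+2) := by
  induction m with
  | zero => simp
  | succ m ih =>
      have h1 : ∑ k ∈ range (m+2), (m+2-k) * Nat.choose (n+k) n
          = (∑ k ∈ range (m+2), (m+1-k) * Nat.choose (n+k) n)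
            + ∑ k ∈ range (m+2), Nat.choose (n+k) n := by
        rw [← sum_add_distrib]
        refine sum_congr rfl fun k hk => ?_
        have : k ≤ m + 1 := by simpa using Nat.lt_succ_iff.mp (mem_range.mp hk)
        have : m + 2 - k = (m + 1 - k) + 1 := by omega
        rw [this, add_mul, one_mul]
      rw [h1, sum_range_succ, Nat.sub_self, zero_mul, add_zero, ih, hockey,
        show n+(m+1)+2 = (n+m+2)+1 by ring, Nat.choose_succ_succ (n+m+2) (n+1), Nat.succ_eq_add_one,
        show n+(m+1)+1 = n+m+2 by ring, show n+1+1 = n+2 by ring]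
      omega

/-- Substituting `y = x` in the type `A_n` F-triangle yields the f-vector of the
type `A_n` associahedron. -/
theorem F_triangle_A_diagonal (n : ℕ) (x : ℚ) :
    ∑ k ∈ range (n + 1), ∑ ℓ ∈ range (n + 1),
        ((ℓ + 1 : ℚ) / (k + ℓ + 1)) * (Nat.choose n (k + ℓ)) *
          (Nat.choose (n + k) n) * x ^ k * x ^ ℓ =
      ∑ k ∈ range (n + 1),
        ((1 : ℚ) / (k + 1)) * (Nat.choose n k) * (Nat.choose (n + k + 2) k) * x ^ k := by
  have hstep : ∑ k ∈ range (n + 1), ∑ ℓ ∈ range (n + 1),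
      ((ℓ + 1 : ℚ) / (k + ℓ + 1)) * (Nat.choose n (k + ℓ)) *
        (Nat.choose (n + k) n) * x ^ k * x ^ ℓ
      = ∑ m ∈ range (n + 1), ∑ k ∈ range (m + 1),
        ((↑(m - k) + 1 : ℚ) / (↑m + 1)) * (Nat.choose n m) *
          (Nat.choose (n + k) n) * x ^ m := by
    rw [← sum_product', sum_sigma']
    rw [← sum_subset (filter_subset
      (fun p : ℕ × ℕ => p.1 + p.2 ≤ n) (range (n+1) ×ˢ range (n+1)))
      (by
        intro p hp hp'
        have : n < p.1 + p.2 := by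
          by_contra h
          exact hp' (mem_filter.mpr ⟨hp, by omega⟩)
        simp [Nat.choose_eq_zero_of_lt this])]
    refine sum_nbij' (fun p => ⟨p.1 + p.2, p.1⟩) (fun q => (q.2, q.1 - q.2)) ?_ ?_ ?_ ?_ ?_
    · intro p hp
      simp only [mem_filter, mem_product, mem_range] at hp
      simp only [mem_sigma, mem_range]
      omega
    · intro q hq
      simp only [mem_sigma, mem_range] at hq
      simp only [mem_filter, mem_product, mem_range]
      omega
    · intro p hp
      simp only [mem_filter, mem_product, mem_range] at hp
      ext <;> simp
    · intro q hq
      simp only [mem_sigma, mem_range] at hq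
      refine Sigma.ext ?_ ?_ <;> simp <;> try omega
    · intro p hp
      simp only [mem_filter, mem_product, mem_range] at hp
      have h1 : p.1 + p.2 - p.1 = p.2 := by omega
      rw [h1]
      push_cast
      rw [pow_add]
      ring
  rw [hstep]
  refine sum_congr rfl fun m hm => ?_
  have hterm : ∀ k ∈ range (m + 1),
      ((↑(m - k) + 1 : ℚ) / (↑m + 1)) * (Nat.choose n m) * (Nat.choose (n + k) n) * x ^ m
      = ((Nat.choose n m : ℚ) * x ^ m / (↑m + 1)) * ↑((m + 1 - k) * Nat.choose (n + k) n) := by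
    intro k hk
    have hk' : k ≤ m := by simpa using Nat.lt_succ_iff.mp (mem_range.mp hk)
    have h1 : ((m - k : ℕ) : ℚ) = (m : ℚ) - k := by
      rw [Nat.cast_sub hk']
    have h2 : ((m + 1 - k : ℕ) : ℚ) = (m : ℚ) + 1 - k := by
      rw [Nat.cast_sub (by omega)]; push_cast; ring
    push_cast [h1, h2]
    ring
  rw [sum_congr rfl hterm, ← mul_sum, ← Nat.cast_sum, L2]
  have hsymm : Nat.choose (n + m + 2) m = Nat.choose (n + m + 2) (n + 2) := by
    have := Nat.choose_symm (show n + 2 ≤ n + m + 2 by omega)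
    rw [show n + m + 2 - (n + 2) = m by omega] at this
    exact this
  rw [hsymm]
  ring
end

section
/- For all nonnegative integers k, ℓ, m: Σ_{k₁=0}^{k} Σ_{ℓ₁=0}^{ℓ} Σ_{m₁=0}^{m} [(ℓ₁+1)(2k₁+ℓ₁+m₁)! / ((k₁+ℓ₁+1)! m₁! k₁!)] * [(ℓ-ℓ₁+1)(2(k-k₁)+(ℓ-ℓ₁)+(m-m₁))! / ((k-k₁+ℓ-ℓ₁+1)! (m-m₁)! (k-k₁)!)] = (2k+ℓ+m+1)! (ℓ+2)(ℓ+1) / (m! k! (k+ℓ+2)!). -/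
/-!
Each factor of the summand has the form `A a b * C(2a+b+c, c)`, where `A a b = ballotNumber a b`
is the coefficient of `x^a` in `C(x)^(b+1)` for the Catalan series `C(x)`. The sum over `m₁` is
then the coefficient of `x^m` in `(1 - x)^(-(2k₁+ℓ₁+1)) (1 - x)^(-(2(k-k₁)+(ℓ-ℓ₁)+1))`, which is
`C(2k+ℓ+m+1, m)` whatever `k₁, ℓ₁` are; the sum over `k₁` is the coefficient of `x^k` in
`C^(ℓ₁+1) C^(ℓ-ℓ₁+1) = C^(ℓ+2)`, again independent of `ℓ₁`; so the sum over `ℓ₁` only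
contributes the factor `ℓ + 1`.
-/

open Finset Nat PowerSeries

theorem sum_range_add_choose_mul_add_choose (a b m : ℕ) :
    ∑ j ∈ range (m + 1), (a + j).choose a * (b + (m - j)).choose b =
      (a + b + 1 + m).choose (a + b + 1) := by
  have h := congrArg (coeff m ∘ Units.val) (invOneSubPow_add ℤ (a + 1) (b + 1))
  simp only [Function.comp_apply, Units.val_mul, show a + 1 + (b + 1) = a + b + 1 + 1 by ring,
    invOneSubPow_val_succ_eq_mk_add_choose, coeff_mul, coeff_mk,
    Nat.sum_antidiagonal_eq_sum_range_succ_mk] at h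
  exact_mod_cast h.symm

noncomputable def ballotNumber (k p : ℕ) : ℚ := (p + 1) * (2 * k + p)! / (k ! * (k + p + 1)!)

theorem ballotNumber_zero_left (p : ℕ) : ballotNumber 0 p = 1 := by
  have := p.factorial_pos
  simp only [ballotNumber, mul_zero, zero_add, factorial_zero, cast_one, one_mul,
    factorial_succ, cast_mul]
  field_simp
  push_cast
  ring

theorem ballotNumber_zero_right (k : ℕ) : ballotNumber k 0 = catalan k := by
  have h : ((k + 1) * catalan k : ℕ) = ((2 * k).choose k : ℚ) := by
    rw [succ_mul_catalan_eq_centralBinom, centralBinom_eq_two_mul_choose]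
  rw [cast_choose ℚ (by omega), show 2 * k - k = k by omega] at h
  have := k.factorial_pos
  simp only [ballotNumber, factorial_succ, add_zero] at h ⊢
  push_cast at h ⊢
  field_simp at h ⊢
  linear_combination -h

theorem ballotNumber_succ_succ (k q : ℕ) :
    ballotNumber (k + 1) (q + 1) = ballotNumber (k + 1) q + ballotNumber k (q + 2) := by
  have := k.factorial_pos
  have := (k + q + 2).factorial_pos
  have := (2 * k + q + 2).factorial_pos
  simp only [ballotNumber, show 2 * (k + 1) + (q + 1) = 2 * k + q + 2 + 1 by ring,
    show 2 * (k + 1) + q = 2 * k + q + 2 by ring, show 2 * k + (q + 2) = 2 * k + q + 2 by ring,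
    show k + 1 + (q + 1) + 1 = k + q + 2 + 1 by ring, show k + 1 + q + 1 = k + q + 2 by ring,
    show k + (q + 2) + 1 = k + q + 2 + 1 by ring, factorial_succ, cast_mul]
  field_simp
  push_cast
  ring

theorem catalanSeries_pow_add_two (q : ℕ) :
    catalanSeries ^ (q + 2) = catalanSeries ^ (q + 1) + X * catalanSeries ^ (q + 3) := by
  calc catalanSeries ^ (q + 2) = catalanSeries ^ (q + 1) * (catalanSeries ^ 2 * X + 1) := by
        rw [catalanSeries_sq_mul_X_add_one, pow_succ]
    _ = catalanSeries ^ (q + 1) + X * catalanSeries ^ (q + 3) := by ring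

theorem coeff_catalanSeries_pow (k p : ℕ) :
    ((coeff k (catalanSeries ^ (p + 1)) : ℕ) : ℚ) = ballotNumber k p := by
  induction k generalizing p with
  | zero => simp [ballotNumber_zero_left]
  | succ k ih =>
    induction p with
    | zero => simp [ballotNumber_zero_right]
    | succ p ihp =>
      rw [catalanSeries_pow_add_two, map_add, coeff_succ_X_mul, cast_add, ihp, ih,
        ballotNumber_succ_succ]

theorem sum_range_ballotNumber_mul_ballotNumber (p q k : ℕ) :
    ∑ i ∈ range (k + 1), ballotNumber i p * ballotNumber (k - i) q =
      ballotNumber k (p + q + 1) := by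
  rw [← coeff_catalanSeries_pow, show p + q + 1 + 1 = (p + 1) + (q + 1) by ring, pow_add,
    coeff_mul, Nat.sum_antidiagonal_eq_sum_range_succ_mk]
  push_cast
  simp only [coeff_catalanSeries_pow]

theorem factorial_ratio_eq_ballotNumber_mul_choose (a b c : ℕ) :
    (b + 1 : ℚ) * (2 * a + b + c)! / ((a + b + 1)! * c ! * a !) =
      ballotNumber a b * (2 * a + b + c).choose (2 * a + b) := by
  rw [cast_choose ℚ (by omega), show 2 * a + b + c - (2 * a + b) = c by omega, ballotNumber]
  have := a.factorial_pos
  have := c.factorial_pos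
  have := (a + b + 1).factorial_pos
  have := (2 * a + b).factorial_pos
  field_simp

theorem sum_range_factorial_ratio_mul_factorial_ratio {k ℓ k₁ ℓ₁ : ℕ} (hk : k₁ ≤ k) (hℓ : ℓ₁ ≤ ℓ)
    (m : ℕ) :
    ∑ m₁ ∈ range (m + 1),
        (((ℓ₁ + 1 : ℚ) * (2 * k₁ + ℓ₁ + m₁)!) / ((k₁ + ℓ₁ + 1)! * m₁ ! * k₁ !)) *
          (((ℓ - ℓ₁ + 1 : ℚ) * (2 * (k - k₁) + (ℓ - ℓ₁) + (m - m₁))!) /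
            (((k - k₁) + (ℓ - ℓ₁) + 1)! * (m - m₁)! * (k - k₁)!)) =
      ballotNumber k₁ ℓ₁ * ballotNumber (k - k₁) (ℓ - ℓ₁) *
        (2 * k + ℓ + 1 + m).choose (2 * k + ℓ + 1) := by
  simp_rw [← Nat.cast_sub hℓ, factorial_ratio_eq_ballotNumber_mul_choose, mul_mul_mul_comm,
    ← mul_sum]
  rw [show 2 * k + ℓ + 1 = 2 * k₁ + ℓ₁ + (2 * (k - k₁) + (ℓ - ℓ₁)) + 1 by omega,
    ← sum_range_add_choose_mul_add_choose]
  norm_cast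

theorem succ_mul_ballotNumber_succ_mul_choose (k ℓ m : ℕ) :
    ((ℓ + 1 : ℕ) : ℚ) * ballotNumber k (ℓ + 1) * (2 * k + ℓ + 1 + m).choose (2 * k + ℓ + 1) =
      ((2 * k + ℓ + m + 1)! * (ℓ + 2) * (ℓ + 1) : ℚ) / (m ! * k ! * (k + ℓ + 2)!) := by
  rw [ballotNumber, cast_choose ℚ (by omega), show 2 * k + ℓ + 1 + m - (2 * k + ℓ + 1) = m by omega,
    show 2 * k + (ℓ + 1) = 2 * k + ℓ + 1 by ring, show k + (ℓ + 1) + 1 = k + ℓ + 2 by ring,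
    show 2 * k + ℓ + 1 + m = 2 * k + ℓ + m + 1 by ring]
  have := k.factorial_pos
  have := m.factorial_pos
  have := (k + ℓ + 2).factorial_pos
  have := (2 * k + ℓ + 1).factorial_pos
  field_simp
  push_cast
  ring

/-- Coefficientwise form of `∂F/∂y = F²` for the type `A` F-triangle generating series,
expressed with factorials. -/
theorem typeA_coefficient_identity (k ℓ m : ℕ) :
    ∑ k₁ ∈ range (k + 1), ∑ ℓ₁ ∈ range (ℓ + 1), ∑ m₁ ∈ range (m + 1),
        (((ℓ₁ + 1 : ℚ) * (2 * k₁ + ℓ₁ + m₁)!) / ((k₁ + ℓ₁ + 1)! * m₁ ! * k₁ !)) *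
          (((ℓ - ℓ₁ + 1 : ℚ) * (2 * (k - k₁) + (ℓ - ℓ₁) + (m - m₁))!) /
            (((k - k₁) + (ℓ - ℓ₁) + 1)! * (m - m₁)! * (k - k₁)!)) =
      ((2 * k + ℓ + m + 1)! * (ℓ + 2) * (ℓ + 1) : ℚ) / (m ! * k ! * (k + ℓ + 2)!) := by
  have sum_k : ∀ ℓ₁ ∈ range (ℓ + 1),
      ∑ k₁ ∈ range (k + 1), ballotNumber k₁ ℓ₁ * ballotNumber (k - k₁) (ℓ - ℓ₁) =
        ballotNumber k (ℓ + 1) := by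
    intro ℓ₁ hℓ₁
    rw [sum_range_ballotNumber_mul_ballotNumber, show ℓ₁ + (ℓ - ℓ₁) + 1 = ℓ + 1 by
      have := mem_range.mp hℓ₁; omega]
  rw [sum_congr rfl fun k₁ hk₁ => sum_congr rfl fun ℓ₁ hℓ₁ =>
      sum_range_factorial_ratio_mul_factorial_ratio (mem_range_succ_iff.mp hk₁)
        (mem_range_succ_iff.mp hℓ₁) m,
    sum_comm]
  simp_rw [← sum_mul]
  rw [sum_congr rfl sum_k, sum_const, card_range, nsmul_eq_mul,
    succ_mul_ballotNumber_succ_mul_choose]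
end
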